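/- Let Γ be a colored tree and MC(Γ) the set of minimally complete subsets of E(Γ). A function n : MC(Γ) → ℤ is of the form n(Y) = ⟨u, v_Y⟩ for some u ∈ M if and only if Σ_{Y ∈ MC(Γ)} m(Y) n(Y) = 0 for every function m : MC(Γ) → ℤ satisfying Σ_{Y ∈ MC(Γ), d ∈ Y} m(Y) = 0 for every edge d ∈ E(Γ). -/

import Mathlib

noncomputable section
open Classical

/-- A rose tree whose leaves ("colored vertices") carry labels of type `α` and whose
internal vertices ("uncolored vertices") are unlabelled. -/
inductive CTree (α : Type) : Type
  | leaf (a : α) : CTree α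
  | node (ts : List (CTree α)) : CTree α

namespace CTree

variable {α : Type}

/-- The subtree of `t` at a position `p` (a list of child indices), if it exists. -/
def sub : CTree α → List ℕ → Option (CTree α)
  | t, [] => some t
  | leaf _, _ :: _ => none
  | node ts, i :: p =>
      match ts[i]? with
      | some c => sub c p
      | none => none

/-- All lists of natural numbers of length at most `k` with entries `< m`. -/
def allLists (m : ℕ) : ℕ → List (List ℕ)
  | 0 => [[]]
  | k + 1 => [] :: (List.range m).flatMap (fun i => (allLists m k).map (i :: ·))

/-- The finite set of positions of vertices of `t`. -/
def vertS (t : CTree α) : Finset (List ℕ) :=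
  (allLists (sizeOf t) (sizeOf t)).toFinset.filter (fun p => (t.sub p).isSome)

/-- The finite set of positions of uncolored (internal) vertices of `t`. -/
def uncS (t : CTree α) : Finset (List ℕ) :=
  (allLists (sizeOf t) (sizeOf t)).toFinset.filter (fun p => ∃ ts, t.sub p = some (node ts))

/-- The finite set of positions of colored vertices (leaves) of `t`. -/
def colS (t : CTree α) : Finset (List ℕ) :=
  (allLists (sizeOf t) (sizeOf t)).toFinset.filter (fun p => ∃ a, t.sub p = some (leaf a))

/-- Edges of `t` are identified with the positions of non-root vertices (an edge joins
the vertex at `p ≠ []` to its parent at `p.dropLast`). -/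
def edgeS (t : CTree α) : Finset (List ℕ) := (vertS t).erase []

/-- `t` is a colored tree: every internal vertex has at least one child (so the leaves,
i.e. the childless vertices, are exactly the colored vertices) and the root is
uncolored. -/
def IsColoredTree (t : CTree α) : Prop :=
  (∀ p, t.sub p ≠ some (node ([] : List (CTree α)))) ∧ ∃ ts, t = node ts

/-- The weight `w_d ∈ M` of an edge `d`: the sum of the dual basis vectors `e_u^*`
over uncolored vertices `u` that are descendants of the upper endpoint of `d` but not
descendants of the lower endpoint of `d`. -/
def wt (t : CTree α) (d : List ℕ) : List ℕ → ℤ := fun u =>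
  if u ∈ uncS t ∧ d.dropLast <+: u ∧ ¬ d <+: u then 1 else 0

/-- `s_v ∈ M` : the sum of `e_u^*` over the uncolored descendants `u` of `v`;
`s(Γ) = sv t []`. -/
def sv (t : CTree α) (v : List ℕ) : List ℕ → ℤ := fun u =>
  if u ∈ uncS t ∧ v <+: u then 1 else 0

/-- The pairing between `M = Hom(ℤ^g, ℤ)` and `ℤ^g` (both realized as integer-valued
functions on the uncolored vertices of `t`). -/
def pairZ (t : CTree α) (μ x : List ℕ → ℤ) : ℤ := ∑ p ∈ uncS t, μ p * x p

/-- The pairing between `M` and `ℝ^g`. -/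
def pairR (t : CTree α) (μ : List ℕ → ℤ) (x : List ℕ → ℝ) : ℝ :=
  ∑ p ∈ uncS t, (μ p : ℝ) * x p

/-- The multiset of edges of the (downward) path from the vertex `v` to the vertex `c`;
each edge occurs with multiplicity one. -/
def pathEdges (t : CTree α) (v c : List ℕ) : Multiset (List ℕ) :=
  ((edgeS t).filter (fun d => v <+: d ∧ d ≠ v ∧ d <+: c)).val

/-- The relation `A ∼ B` on multisets of edges: `A` and `B` consist exactly of the edges
of two non-self-crossing paths from a common vertex to two colored vertices. -/
def Sim (t : CTree α) (A B : Multiset (List ℕ)) : Prop :=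
  ∃ v ∈ vertS t, ∃ c₁ ∈ colS t, ∃ c₂ ∈ colS t, v <+: c₁ ∧ v <+: c₂ ∧
    A = pathEdges t v c₁ ∧ B = pathEdges t v c₂

/-- `Y` is a minimally complete subset of the set of edges of `t`: every
(non-self-crossing) path from the root to a colored vertex contains exactly one edge
of `Y`. -/
def MinComplete (t : CTree α) (Y : Finset (List ℕ)) : Prop :=
  Y ⊆ edgeS t ∧ ∀ c ∈ colS t, ∃! d, d ∈ Y ∧ d <+: c

/-- The finite set of minimally complete subsets of the edge set of `t`. -/
def MCfin (t : CTree α) : Finset (Finset (List ℕ)) :=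
  (edgeS t).powerset.filter (fun Y => MinComplete t Y)

/-- The dual cone `C(Γ) = {x ∈ ℝ^g | ⟨w_d, x⟩ ≥ 0 for all edges d}`. -/
def dualCone (t : CTree α) : Set (List ℕ → ℝ) :=
  {x | (∀ p, p ∉ uncS t → x p = 0) ∧ ∀ d ∈ edgeS t, 0 ≤ pairR t (wt t d) x}

/-- The ray spanned by a vector `v`. -/
def ray (v : List ℕ → ℝ) : Set (List ℕ → ℝ) := {x | ∃ c : ℝ, 0 ≤ c ∧ x = c • v}

/-- `F` is a one-dimensional face (extreme ray) of the convex cone `C`. -/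
def IsOneDimFace (C F : Set (List ℕ → ℝ)) : Prop :=
  F ⊆ C ∧ (∃ v, v ≠ 0 ∧ F = ray v) ∧
    ∀ x ∈ C, ∀ y ∈ C, x + y ∈ F → x ∈ F ∧ y ∈ F

/-- The convex cone generated by a set `G ⊆ ℤ^g` inside `ℝ^g`: all finite nonnegative
real combinations of elements of `G`. -/
def coneHull (G : Set (List ℕ → ℤ)) : Set (List ℕ → ℝ) :=
  {x | ∃ (F : Finset (List ℕ → ℤ)) (c : (List ℕ → ℤ) → ℝ),
    ↑F ⊆ G ∧ (∀ v ∈ F, 0 ≤ c v) ∧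
    x = ∑ v ∈ F, c v • (fun p => ((v p : ℤ) : ℝ))}

/-- `e_{v_0} ∈ ℤ^g`: the basis vector of the root vertex. -/
def e0 : List ℕ → ℤ := fun p => if p = [] then 1 else 0

/-- The inclusion `ℤ^{g_i} → ℤ^g` corresponding to the `i`-th principal subtree. -/
def shift (i : ℕ) (f : List ℕ → ℤ) : List ℕ → ℤ := fun p =>
  match p with
  | [] => 0
  | j :: q => if j = i then f q else 0

def isNodeB : CTree α → Bool
  | leaf _ => false
  | node _ => true

/-- The recursively defined set `G(Γ) ⊆ ℤ^g`: `G(Γ)` consists of all vectors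
`e_{v₀} + ∑_{i ∈ J} (w_i - e_{v₀})` where `J` ranges over subsets of the set of indices
of non-trivial principal subtrees and `w_i ∈ G(Γ_i)` (in particular if `g = 1` this is
just `{e_{v₀}}`). -/
def Gset : CTree α → Set (List ℕ → ℤ)
  | leaf _ => ∅
  | node ts =>
      {v | ∃ (J : Finset (Fin ts.length)) (w : Fin ts.length → (List ℕ → ℤ)),
        (∀ i ∈ J, (ts.get i).isNodeB = true ∧ w i ∈ Gset (ts.get i)) ∧
        v = e0 + ∑ i ∈ J, (shift i.1 (w i) - e0)}
  termination_by t => sizeOf t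
  decreasing_by
    have h1 : ts.get i ∈ ts := List.get_mem ts i
    have h2 := List.sizeOf_lt_of_mem h1
    simp only [CTree.node.sizeOf_spec]
    omega

/-- Transport of a set of edges of `Γ` to the `i`-th principal subtree
(`Y ∩ E(Γ_i)`, rewritten in the coordinates of `Γ_i`). -/
def sect (i : ℕ) (Y : Finset (List ℕ)) : Finset (List ℕ) :=
  (Y.filter (fun p => p.head? = some i)).image List.tail

/-- The recursively defined vector `v_Y ∈ ℤ^g` attached to a (minimally complete) set
of edges `Y`: `v_Y = e_{v₀} + ∑_{i ∈ I} (v_{Y_i} - e_{v₀})` where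
`I = {i | d_i ∉ Y}` and `Y_i = Y ∩ E(Γ_i)` (if `g = 1` this is just `e_{v₀}`). -/
def vY : CTree α → Finset (List ℕ) → (List ℕ → ℤ)
  | leaf _, _ => 0
  | node ts, Y =>
      e0 + ∑ i ∈ Finset.univ.filter (fun i : Fin ts.length => [i.1] ∉ Y),
        (shift i.1 (vY (ts.get i) (sect i.1 Y)) - e0)
  termination_by t => sizeOf t
  decreasing_by
    have h1 : ts.get i ∈ ts := List.get_mem ts i
    have h2 := List.sizeOf_lt_of_mem h1
    simp only [CTree.node.sizeOf_spec]
    omega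

/-- The set of balanced labellings `X(Γ) ⊆ ℂ^{E(Γ)}`. -/
def Xbal (t : CTree α) : Set (List ℕ → ℂ) :=
  {x | ∀ v ∈ uncS t, ∀ c ∈ colS t, ∀ c' ∈ colS t, v <+: c → v <+: c' →
    ((pathEdges t v c).map x).prod = ((pathEdges t v c').map x).prod}

/-- `Y ⊆ E(Γ)` is complete: for every finite multiset `A` of edges, the monomial
`∏_{d ∈ A} x_d` vanishes identically on `{x ∈ X(Γ) | x_y = 0 ∀ y ∈ Y}` if and only if
`A` contains at least one edge belonging to `Y`. -/
def CompleteSet (t : CTree α) (Y : Finset (List ℕ)) : Prop :=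
  ∀ A : Multiset (List ℕ), (∀ d ∈ A, d ∈ edgeS t) →
    ((∀ x ∈ Xbal t, (∀ y ∈ Y, x y = 0) → (A.map x).prod = 0) ↔ ∃ d ∈ A, d ∈ Y)

/-- A partition of a type `I`: a finite collection of nonempty pairwise disjoint
subsets covering `I`. -/
def IsPart {I : Type} (P : Finset (Finset I)) : Prop :=
  (∀ S ∈ P, S ≠ ∅) ∧ ∀ a : I, ∃! S, S ∈ P ∧ a ∈ S

/-- The tree with a single uncolored vertex whose children are the colored vertices
labelled by the elements of `S`. -/
def blockTree {I : Type} (S : Finset I) : CTree I := node (S.toList.map leaf)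

/-- The colored tree `Γ_P` of a partition `P`: the root has one child for each block
`S ∈ P`, an uncolored vertex whose children are colored vertices labelled by the
elements of `S`. -/
def gammaP {I : Type} (P : Finset (Finset I)) : CTree I := node (P.toList.map blockTree)

/-- A tree homomorphism `t → t'`, described by a map `f` on vertex positions: it sends
root to root, vertices to vertices, the two endpoints of any edge to the two endpoints
of an edge, and restricts to a label-preserving bijection between the colored
vertices. -/
def TreeHom {I : Type} (t t' : CTree I) (f : List ℕ → List ℕ) : Prop :=
  f [] = [] ∧
  (∀ p ∈ vertS t, f p ∈ vertS t') ∧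
  (∀ p ∈ vertS t, p ≠ [] →
    (f p ≠ [] ∧ (f p).dropLast = f p.dropLast) ∨
    (f p.dropLast ≠ [] ∧ (f p.dropLast).dropLast = f p)) ∧
  (∀ p a, t.sub p = some (leaf a) → t'.sub (f p) = some (leaf a)) ∧
  Set.BijOn f {p | ∃ a, t.sub p = some (leaf a)} {q | ∃ a, t'.sub q = some (leaf a)}

/-- A partition `P` of the label set is compatible with the colored tree `t` if there
exists a tree homomorphism `t → Γ_P`. -/
def Compatible {I : Type} (t : CTree I) (P : Finset (Finset I)) : Prop :=
  ∃ f, TreeHom t (gammaP P) f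

/-- `C_y ⊆ I` : the labels of the colored vertices whose path from the root contains
the edge `y`. -/
def Cy {I : Type} [Fintype I] [DecidableEq I] (t : CTree I) (y : List ℕ) : Finset I :=
  Finset.univ.filter (fun a => ∃ p, t.sub p = some (leaf a) ∧ y <+: p)

end CTree

/-!
Call a vertex `r` uncut by `Y` if no edge of `Y` lies on the path from the root to `r`.
Unwinding the recursion, `v_Y(q) = [q uncut] - ∑_{c child of q} [c uncut]` at every uncolored
vertex `q`.

If `Y` is minimally complete and `c` is a colored descendant of `r`, then `[r uncut]` counts the
edges of `Y` on the path to `c` below `r`; so every coordinate of `v_Y` is an integer combination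
of the incidences `[d ∈ Y]`, and is killed by every relation `m`. Conversely, telescoping gives
`⟨s_r, v_Y⟩ = [r uncut]`, hence `⟨w_d, v_Y⟩ = ⟨s_{parent d} - s_d, v_Y⟩ = [d ∈ Y]`; and the set
`Y_p` of edges leaving the path to `p` has `v_{Y_p} = e_p`. Thus `Y₀ - ∑_p v_{Y₀}(p) Y_p` is a
relation, and pairing it with `n` gives `n(Y₀) = ⟨u, v_{Y₀}⟩` for `u(p) = n(Y_p)`.
-/

theorem List.ne_nil_and_prefix_dropLast_iff {β : Type*} {r s : List β} :
    s ≠ [] ∧ r <+: s.dropLast ↔ r <+: s ∧ r ≠ s := by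
  constructor
  · rintro ⟨hs, h⟩
    refine ⟨h.trans (List.dropLast_prefix s), fun hrs => ?_⟩
    have := h.length_le
    rw [List.length_dropLast, hrs] at this
    exact hs (List.length_eq_zero_iff.1 (by omega))
  · rintro ⟨h, hrs⟩
    have hlt : r.length < s.length :=
      lt_of_le_of_ne h.length_le fun hl => hrs (h.eq_of_length hl)
    refine ⟨by rintro rfl; simp at hlt, ?_⟩
    exact List.prefix_of_prefix_length_le h (List.dropLast_prefix s)
      (by rw [List.length_dropLast]; omega)

section IncidenceRelations

variable {ι V R : Type*} [DecidableEq ι] [CommRing R] {E : Finset ι} {𝒮 : Finset (Finset ι)}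

theorem sum_mul_sum_indicator_eq_zero {m : Finset ι → R}
    (hm : ∀ d ∈ E, ∑ Y ∈ 𝒮.filter (fun Y => d ∈ Y), m Y = 0) {D : Finset ι} (hD : D ⊆ E) :
    ∑ Y ∈ 𝒮, m Y * ∑ d ∈ D, (if d ∈ Y then 1 else 0) = 0 := by
  simp_rw [Finset.mul_sum, mul_ite, mul_one, mul_zero]
  rw [Finset.sum_comm]
  exact Finset.sum_eq_zero fun d hd => by rw [← Finset.sum_filter, hm d (hD hd)]

theorem sum_mul_sub_sum_mul_ite_eq (F : Finset (Finset ι)) (g : Finset ι → R)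
    (Y₀ : Finset ι) (U : Finset V) (c : V → R) (b : V → Finset ι) :
    ∑ Y ∈ F, ((if Y = Y₀ then 1 else 0) - ∑ p ∈ U, c p * if Y = b p then 1 else 0) * g Y =
      (if Y₀ ∈ F then g Y₀ else 0) - ∑ p ∈ U, c p * if b p ∈ F then g (b p) else 0 := by
  simp only [sub_mul, Finset.sum_sub_distrib, Finset.sum_mul, ite_mul, one_mul, zero_mul, mul_assoc]
  rw [Finset.sum_ite_eq', Finset.sum_comm]
  simp [Finset.sum_ite_eq']

theorem exists_eq_sum_mul_of_forall_relation [DecidableEq V] {U : Finset V} {φ : Finset ι → V → R}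
    (hw : ∀ d ∈ E, ∃ w : V → R, ∀ Y ∈ 𝒮, (if d ∈ Y then 1 else 0) = ∑ q ∈ U, w q * φ Y q)
    (hbasis : ∀ p ∈ U, ∃ Y ∈ 𝒮, ∀ q ∈ U, φ Y q = if q = p then 1 else 0)
    {n : Finset ι → R}
    (hn : ∀ m : Finset ι → R, (∀ d ∈ E, ∑ Y ∈ 𝒮.filter (fun Y => d ∈ Y), m Y = 0) →
      ∑ Y ∈ 𝒮, m Y * n Y = 0) :
    ∃ u : V → R, ∀ Y ∈ 𝒮, n Y = ∑ q ∈ U, u q * φ Y q := by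
  choose! b hb𝒮 hbφ using hbasis
  refine ⟨fun p => n (b p), fun Y₀ hY₀ => ?_⟩
  let m : Finset ι → R := fun Y =>
    (if Y = Y₀ then 1 else 0) - ∑ p ∈ U, φ Y₀ p * if Y = b p then 1 else 0
  have hm : ∀ d ∈ E, ∑ Y ∈ 𝒮.filter (fun Y => d ∈ Y), m Y = 0 := by
    intro d hd
    obtain ⟨w, hw⟩ := hw d hd
    have hwb : ∀ p ∈ U, φ Y₀ p * (if b p ∈ 𝒮.filter (fun Y => d ∈ Y) then 1 else 0) =
        w p * φ Y₀ p := by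
      intro p hp
      have : (if d ∈ b p then (1 : R) else 0) = w p := by
        rw [hw _ (hb𝒮 p hp), Finset.sum_congr rfl fun q hq => by rw [hbφ p hp q hq]]
        simp [hp]
      simp [Finset.mem_filter, hb𝒮 p hp, ← this, mul_comm]
    have key := sum_mul_sub_sum_mul_ite_eq (𝒮.filter (fun Y => d ∈ Y)) (fun _ => (1 : R)) Y₀ U
      (φ Y₀) b
    simp only [mul_one] at key
    rw [show ∑ Y ∈ 𝒮.filter (fun Y => d ∈ Y), m Y = _ from key, Finset.sum_congr rfl hwb,
      ← hw Y₀ hY₀]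
    simp [hY₀]
  have := hn m hm
  rw [sum_mul_sub_sum_mul_ite_eq, if_pos hY₀, sub_eq_zero] at this
  rw [this]
  exact Finset.sum_congr rfl fun p hp => by rw [if_pos (hb𝒮 p hp), mul_comm]

theorem exists_eq_sum_mul_iff_forall_relation [DecidableEq V] {U : Finset V} {φ : Finset ι → V → R}
    (hφ : ∀ m : Finset ι → R, (∀ d ∈ E, ∑ Y ∈ 𝒮.filter (fun Y => d ∈ Y), m Y = 0) →
      ∀ q ∈ U, ∑ Y ∈ 𝒮, m Y * φ Y q = 0)
    (hw : ∀ d ∈ E, ∃ w : V → R, ∀ Y ∈ 𝒮, (if d ∈ Y then 1 else 0) = ∑ q ∈ U, w q * φ Y q)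
    (hbasis : ∀ p ∈ U, ∃ Y ∈ 𝒮, ∀ q ∈ U, φ Y q = if q = p then 1 else 0) (n : Finset ι → R) :
    (∃ u : V → R, ∀ Y ∈ 𝒮, n Y = ∑ q ∈ U, u q * φ Y q) ↔
      ∀ m : Finset ι → R, (∀ d ∈ E, ∑ Y ∈ 𝒮.filter (fun Y => d ∈ Y), m Y = 0) →
        ∑ Y ∈ 𝒮, m Y * n Y = 0 := by
  refine ⟨fun ⟨u, hu⟩ m hm => ?_, exists_eq_sum_mul_of_forall_relation hw hbasis⟩
  rw [Finset.sum_congr rfl fun Y hY => by rw [hu Y hY, Finset.mul_sum], Finset.sum_comm]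
  refine Finset.sum_eq_zero fun q hq => ?_
  simp_rw [mul_left_comm (m _), ← Finset.mul_sum, hφ m hm q hq, mul_zero]

end IncidenceRelations

namespace CTree

variable {α : Type}

theorem mem_allLists {m k : ℕ} {p : List ℕ} :
    p ∈ allLists m k ↔ p.length ≤ k ∧ ∀ i ∈ p, i < m := by
  induction k generalizing p with
  | zero => cases p <;> simp [allLists]
  | succ k ih =>
    cases p with
    | nil => simp [allLists]
    | cons i q => simp [allLists, ih, and_left_comm]

theorem sub_append (t : CTree α) (p q : List ℕ) :
    t.sub (p ++ q) = (t.sub p).bind (fun s => s.sub q) := by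
  induction p generalizing t with
  | nil => simp [sub]
  | cons i p ih =>
    cases t with
    | leaf a => simp [sub]
    | node ts =>
      simp only [List.cons_append, sub]
      cases ts[i]? <;> simp [ih]

theorem sub_cons_eq_some {ts : List (CTree α)} {i : ℕ} {p : List ℕ} {s : CTree α}
    (h : (node ts).sub (i :: p) = some s) : ∃ hi : i < ts.length, ts[i].sub p = some s := by
  simp only [sub] at h
  split at h
  · rename_i c hc
    obtain ⟨hi, rfl⟩ := List.getElem?_eq_some_iff.1 hc
    exact ⟨hi, h⟩
  · exact nomatch h

theorem length_lt_sizeOf (ts : List (CTree α)) : ts.length < sizeOf ts := by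
  induction ts with
  | nil => simp
  | cons a ts ih => simp only [List.length_cons, List.cons.sizeOf_spec]; omega

theorem bounds_of_sub_eq_some {t : CTree α} {p : List ℕ} {s : CTree α}
    (h : t.sub p = some s) : p.length + sizeOf s ≤ sizeOf t ∧ ∀ i ∈ p, i < sizeOf t := by
  induction p generalizing t with
  | nil => cases h; simp
  | cons i p ih =>
    cases t with
    | leaf a => simp [sub] at h
    | node ts =>
      obtain ⟨hi, hs⟩ := sub_cons_eq_some h
      have hsize : sizeOf ts[i] < sizeOf ts := List.sizeOf_lt_of_mem (List.getElem_mem hi)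
      have hlen := length_lt_sizeOf ts
      obtain ⟨ih₁, ih₂⟩ := ih hs
      simp only [List.length_cons, node.sizeOf_spec, List.mem_cons, forall_eq_or_imp]
      exact ⟨by omega, by omega, fun j hj => by have := ih₂ j hj; omega⟩

theorem mem_filter_allLists {t : CTree α} {P : List ℕ → Prop} [DecidablePred P]
    (hP : ∀ p, P p → (t.sub p).isSome) {p : List ℕ} :
    p ∈ (allLists (sizeOf t) (sizeOf t)).toFinset.filter P ↔ P p := by
  refine ⟨fun h => (Finset.mem_filter.1 h).2, fun h => Finset.mem_filter.2 ⟨?_, h⟩⟩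
  obtain ⟨s, hs⟩ := Option.isSome_iff_exists.1 (hP p h)
  obtain ⟨hlen, hi⟩ := bounds_of_sub_eq_some hs
  have : 0 < sizeOf s := by cases s <;> simp
  exact List.mem_toFinset.2 (mem_allLists.2 ⟨by omega, hi⟩)

theorem mem_vertS {t : CTree α} {p : List ℕ} : p ∈ vertS t ↔ (t.sub p).isSome := by
  unfold vertS
  exact mem_filter_allLists fun _ => id

theorem mem_uncS {t : CTree α} {p : List ℕ} : p ∈ uncS t ↔ ∃ ts, t.sub p = some (node ts) := by
  unfold uncS
  exact mem_filter_allLists fun _ ⟨_, h⟩ => by simp [h]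

theorem mem_colS {t : CTree α} {p : List ℕ} : p ∈ colS t ↔ ∃ a, t.sub p = some (leaf a) := by
  unfold colS
  exact mem_filter_allLists fun _ ⟨_, h⟩ => by simp [h]

theorem uncS_subset_vertS {t : CTree α} : uncS t ⊆ vertS t := fun _ hp => by
  obtain ⟨ts, h⟩ := mem_uncS.1 hp
  simp [mem_vertS, h]

theorem colS_subset_vertS {t : CTree α} : colS t ⊆ vertS t := fun _ hp => by
  obtain ⟨a, h⟩ := mem_colS.1 hp
  simp [mem_vertS, h]

theorem mem_uncS_or_mem_colS {t : CTree α} {p : List ℕ} (h : p ∈ vertS t) :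
    p ∈ uncS t ∨ p ∈ colS t := by
  obtain ⟨s, hs⟩ := Option.isSome_iff_exists.1 (mem_vertS.1 h)
  cases s with
  | leaf a => exact .inr (mem_colS.2 ⟨a, hs⟩)
  | node ts => exact .inl (mem_uncS.2 ⟨ts, hs⟩)

theorem notMem_colS_of_mem_uncS {t : CTree α} {p : List ℕ} (h : p ∈ uncS t) : p ∉ colS t := by
  obtain ⟨ts, hts⟩ := mem_uncS.1 h
  simp [mem_colS, hts]

theorem mem_vertS_of_prefix {t : CTree α} {p q : List ℕ} (hq : q ∈ vertS t) (hpq : p <+: q) :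
    p ∈ vertS t := by
  obtain ⟨r, rfl⟩ := hpq
  rw [mem_vertS, sub_append] at hq
  rw [mem_vertS]
  cases h : t.sub p <;> simp_all

theorem dropLast_mem_uncS {t : CTree α} {p : List ℕ} (h : p ∈ vertS t) (hp : p ≠ []) :
    p.dropLast ∈ uncS t := by
  rw [mem_vertS, ← List.dropLast_append_getLast hp, sub_append] at h
  rw [mem_uncS]
  cases hs : t.sub p.dropLast with
  | none => simp [hs] at h
  | some s => cases s <;> simp_all [sub]

theorem eq_of_mem_colS_of_prefix {t : CTree α} {c r : List ℕ} (hc : c ∈ colS t)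
    (hr : r ∈ vertS t) (h : c <+: r) : r = c := by
  obtain ⟨a, ha⟩ := mem_colS.1 hc
  obtain ⟨_ | ⟨i, s⟩, rfl⟩ := h
  · simp
  · rw [mem_vertS, sub_append, ha] at hr
    simp [sub] at hr

theorem exists_mem_colS_prefix {t : CTree α} (hne : ∀ p, t.sub p ≠ some (node []))
    {q : List ℕ} (hq : q ∈ vertS t) : ∃ c ∈ colS t, q <+: c := by
  obtain ⟨s, hs⟩ := Option.isSome_iff_exists.1 (mem_vertS.1 hq)
  clear hq
  induction hsize : sizeOf s using Nat.strong_induction_on generalizing q s with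
  | _ n ih =>
    match s, hs with
    | leaf a, hs => exact ⟨q, mem_colS.2 ⟨a, hs⟩, List.prefix_refl q⟩
    | node [], hs => exact absurd hs (hne q)
    | node (c :: cs), hs =>
      have hc : t.sub (q ++ [0]) = some c := by simp [sub_append, hs, sub]
      obtain ⟨r, hr, hqr⟩ := ih (sizeOf c) (by subst hsize; simp; omega) c hc rfl
      exact ⟨r, hr, (List.prefix_append q [0]).trans hqr⟩

def uncut (Y : Finset (List ℕ)) (r : List ℕ) : ℤ :=
  if ∃ e ∈ Y, e ≠ [] ∧ e <+: r then 0 else 1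

theorem mem_sect {i : ℕ} {Y : Finset (List ℕ)} {e : List ℕ} : e ∈ sect i Y ↔ i :: e ∈ Y := by
  simp only [sect, Finset.mem_image, Finset.mem_filter]
  constructor
  · rintro ⟨_ | ⟨j, d⟩, ⟨hd, hj⟩, rfl⟩
    · simp at hj
    · simp_all
  · exact fun h => ⟨i :: e, ⟨h, rfl⟩, rfl⟩

theorem uncut_nil (Y : Finset (List ℕ)) : uncut Y [] = 1 := by
  simp [uncut]

theorem uncut_cons (Y : Finset (List ℕ)) (j : ℕ) (r : List ℕ) :
    uncut Y (j :: r) = if [j] ∈ Y then 0 else uncut (sect j Y) r := by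
  by_cases hj : [j] ∈ Y
  · rw [if_pos hj, uncut, if_pos ⟨[j], hj, by simp, by simp⟩]
  · rw [if_neg hj, uncut, uncut]
    congr 1
    refine propext ⟨?_, ?_⟩
    · rintro ⟨_ | ⟨k, e⟩, he, hne, hpre⟩
      · exact absurd rfl hne
      · obtain ⟨rfl, hre⟩ := List.cons_prefix_cons.1 hpre
        exact ⟨e, mem_sect.2 he, by rintro rfl; exact hj he, hre⟩
    · rintro ⟨e, he, -, hpre⟩
      exact ⟨j :: e, mem_sect.1 he, by simp, List.cons_prefix_cons.2 ⟨rfl, hpre⟩⟩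

theorem vY_node_nil (ts : List (CTree α)) (Y : Finset (List ℕ)) :
    vY (node ts) Y [] = 1 - ∑ c ∈ Finset.range ts.length, if [c] ∈ Y then 0 else 1 := by
  rw [vY, ← Fin.sum_univ_eq_sum_range (fun c => if [c] ∈ Y then (0 : ℤ) else 1), Pi.add_apply,
    Finset.sum_apply, Finset.sum_filter]
  simp [shift, e0, sub_eq_add_neg, ← Finset.sum_neg_distrib, apply_ite]

theorem vY_node_cons (ts : List (CTree α)) (Y : Finset (List ℕ)) {j : ℕ} (hj : j < ts.length)
    (q : List ℕ) :
    vY (node ts) Y (j :: q) = if [j] ∈ Y then 0 else vY ts[j] (sect j Y) q := by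
  rw [vY, Pi.add_apply, Finset.sum_apply, Finset.sum_filter]
  simp only [e0, reduceCtorEq, ↓reduceIte, List.get_eq_getElem, Pi.sub_apply, shift, sub_zero,
    ite_not, zero_add]
  rw [Finset.sum_eq_single ⟨j, hj⟩
    (fun i _ hi => by simp [show j ≠ i.1 from fun h => hi (Fin.ext h.symm)]) (by simp)]
  simp

theorem vY_apply_of_sub_eq_node (t : CTree α) (Y : Finset (List ℕ)) {p : List ℕ}
    {us : List (CTree α)} (hp : t.sub p = some (node us)) :
    vY t Y p = uncut Y p - ∑ c ∈ Finset.range us.length, uncut Y (p ++ [c]) := by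
  induction p generalizing t Y with
  | nil =>
    cases hp
    simp [vY_node_nil, uncut_nil, uncut_cons]
  | cons j q ih =>
    cases t with
    | leaf a => simp [sub] at hp
    | node ts =>
      obtain ⟨hj, hq⟩ := sub_cons_eq_some hp
      by_cases hjY : [j] ∈ Y <;> simp [vY_node_cons ts Y hj, uncut_cons, hjY, ih _ _ hq]

variable {t : CTree α}

theorem append_singleton_mem_vertS_iff {q : List ℕ} {us : List (CTree α)}
    (hq : t.sub q = some (node us)) {c : ℕ} : q ++ [c] ∈ vertS t ↔ c < us.length := by
  by_cases hc : c < us.length <;> simp [mem_vertS, sub_append, hq, sub, hc]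

def children (t : CTree α) (q : List ℕ) : Finset (List ℕ) :=
  (vertS t).filter (fun s => s ≠ [] ∧ s.dropLast = q)

theorem sum_range_append_singleton {q : List ℕ} {us : List (CTree α)}
    (hq : t.sub q = some (node us)) (f : List ℕ → ℤ) :
    ∑ c ∈ Finset.range us.length, f (q ++ [c]) = ∑ s ∈ children t q, f s := by
  have himage : (Finset.range us.length).image (fun c => q ++ [c]) = children t q := by
    ext s
    simp only [children, Finset.mem_image, Finset.mem_range, Finset.mem_filter]
    constructor
    · rintro ⟨c, hc, rfl⟩
      exact ⟨(append_singleton_mem_vertS_iff hq).2 hc, by simp, by simp⟩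
    · rintro ⟨hs, hne, rfl⟩
      have hlast := List.dropLast_append_getLast hne
      exact ⟨_, (append_singleton_mem_vertS_iff hq).1 (by rwa [hlast]), hlast⟩
  rw [← himage, Finset.sum_image fun a _ b _ h => by simpa using h]

theorem mem_MCfin {Y : Finset (List ℕ)} : Y ∈ MCfin t ↔ MinComplete t Y := by
  unfold MCfin
  rw [Finset.mem_filter, Finset.mem_powerset]
  exact ⟨And.right, fun h => ⟨h.1, h⟩⟩

theorem exists_mem_prefix_of_mem_colS {Y : Finset (List ℕ)} (hY : Y ∈ MCfin t) {c : List ℕ}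
    (hc : c ∈ colS t) : ∃ d₀ ∈ Y, d₀ ≠ [] ∧ d₀ <+: c ∧ ∀ d ∈ Y, d <+: c → d = d₀ := by
  obtain ⟨hYE, hYc⟩ := mem_MCfin.1 hY
  obtain ⟨d₀, ⟨hd₀, hd₀c⟩, huniq⟩ := hYc c hc
  exact ⟨d₀, hd₀, (Finset.mem_erase.1 (hYE hd₀)).1, hd₀c, fun d hd hdc => huniq d ⟨hd, hdc⟩⟩

theorem uncut_eq_ite {Y : Finset (List ℕ)} {c d₀ r : List ℕ} (hd₀ : d₀ ∈ Y) (hne : d₀ ≠ [])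
    (huniq : ∀ d ∈ Y, d <+: c → d = d₀) (hrc : r <+: c) :
    uncut Y r = if d₀ <+: r then 0 else 1 := by
  unfold uncut
  congr 1
  exact propext ⟨fun ⟨e, he, _, her⟩ => huniq e he (her.trans hrc) ▸ her,
    fun h => ⟨d₀, hd₀, hne, h⟩⟩

section MinComplete

variable {Y : Finset (List ℕ)}

theorem uncut_eq_zero_of_mem_colS (hY : Y ∈ MCfin t) {c : List ℕ} (hc : c ∈ colS t) :
    uncut Y c = 0 := by
  obtain ⟨d₀, hd₀, hne, hd₀c, huniq⟩ := exists_mem_prefix_of_mem_colS hY hc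
  rw [uncut_eq_ite hd₀ hne huniq (List.prefix_refl c), if_pos hd₀c]

theorem uncut_eq_sum_indicator (hY : Y ∈ MCfin t) {c r : List ℕ} (hc : c ∈ colS t)
    (hrc : r <+: c) :
    uncut Y r = ∑ d ∈ (edgeS t).filter (fun d => d <+: c ∧ ¬ d <+: r), if d ∈ Y then 1 else 0 := by
  obtain ⟨d₀, hd₀, hne, hd₀c, huniq⟩ := exists_mem_prefix_of_mem_colS hY hc
  have hd₀E : d₀ ∈ edgeS t := (mem_MCfin.1 hY).1 hd₀
  rw [uncut_eq_ite hd₀ hne huniq hrc, Finset.sum_congr rfl fun d hd =>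
    if_congr ⟨fun h => huniq d h (Finset.mem_filter.1 hd).2.1, fun h => h ▸ hd₀⟩ rfl rfl,
    Finset.sum_ite_eq']
  by_cases h : d₀ <+: r <;> simp [h, hd₀E, hd₀c]

theorem uncut_dropLast_sub_uncut (hne : ∀ p, t.sub p ≠ some (node [])) (hY : Y ∈ MCfin t)
    {d : List ℕ} (hd : d ∈ edgeS t) :
    uncut Y d.dropLast - uncut Y d = if d ∈ Y then 1 else 0 := by
  obtain ⟨hdnil, hdv⟩ := Finset.mem_erase.1 hd
  obtain ⟨c, hc, hdc⟩ := exists_mem_colS_prefix hne hdv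
  obtain ⟨d₀, hd₀, hd₀nil, hd₀c, huniq⟩ := exists_mem_prefix_of_mem_colS hY hc
  have hmem : d ∈ Y ↔ d = d₀ := ⟨fun h => huniq d h hdc, fun h => h ▸ hd₀⟩
  have hdrop : d₀ <+: d.dropLast ↔ d₀ <+: d ∧ d₀ ≠ d := by
    rw [← List.ne_nil_and_prefix_dropLast_iff, and_iff_right hdnil]
  rw [uncut_eq_ite hd₀ hd₀nil huniq ((List.dropLast_prefix d).trans hdc),
    uncut_eq_ite hd₀ hd₀nil huniq hdc, if_congr hmem rfl rfl, if_congr hdrop rfl rfl]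
  by_cases h₁ : d = d₀
  · subst h₁; simp
  · by_cases h₂ : d₀ <+: d <;> simp [h₁, h₂, Ne.symm h₁]

end MinComplete

theorem sum_mul_uncut_eq_zero {m : Finset (List ℕ) → ℤ} (hne : ∀ p, t.sub p ≠ some (node []))
    (hm : ∀ d ∈ edgeS t, ∑ Y ∈ (MCfin t).filter (fun Y => d ∈ Y), m Y = 0) {r : List ℕ}
    (hr : r ∈ vertS t) :
    ∑ Y ∈ MCfin t, m Y * uncut Y r = 0 := by
  obtain ⟨c, hc, hrc⟩ := exists_mem_colS_prefix hne hr
  rw [Finset.sum_congr rfl fun Y hY => by rw [uncut_eq_sum_indicator hY hc hrc]]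
  exact sum_mul_sum_indicator_eq_zero hm (Finset.filter_subset _ _)

theorem sum_mul_vY_eq_zero {m : Finset (List ℕ) → ℤ} (hne : ∀ p, t.sub p ≠ some (node []))
    (hm : ∀ d ∈ edgeS t, ∑ Y ∈ (MCfin t).filter (fun Y => d ∈ Y), m Y = 0) {q : List ℕ}
    (hq : q ∈ uncS t) :
    ∑ Y ∈ MCfin t, m Y * vY t Y q = 0 := by
  obtain ⟨us, hus⟩ := mem_uncS.1 hq
  simp_rw [vY_apply_of_sub_eq_node t _ hus, mul_sub, Finset.mul_sum, Finset.sum_sub_distrib]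
  rw [Finset.sum_comm, sum_mul_uncut_eq_zero hne hm (uncS_subset_vertS hq), zero_sub, neg_eq_zero]
  exact Finset.sum_eq_zero fun c hc => sum_mul_uncut_eq_zero hne hm
    ((append_singleton_mem_vertS_iff hus).2 (Finset.mem_range.1 hc))

theorem pairZ_sub_left (μ ν x : List ℕ → ℤ) :
    pairZ t (μ - ν) x = pairZ t μ x - pairZ t ν x := by
  simp only [pairZ, Pi.sub_apply, sub_mul, Finset.sum_sub_distrib]

theorem wt_eq_sv_sub_sv (d : List ℕ) : wt t d = sv t d.dropLast - sv t d := by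
  ext u
  have : d <+: u → d.dropLast <+: u := (List.dropLast_prefix d).trans
  simp only [wt, sv, Pi.sub_apply]
  by_cases hu : u ∈ uncS t <;> by_cases h₁ : d.dropLast <+: u <;> by_cases h₂ : d <+: u <;>
    simp_all

theorem pairZ_sv (r : List ℕ) (x : List ℕ → ℤ) :
    pairZ t (sv t r) x = ∑ p ∈ (uncS t).filter (fun p => r <+: p), x p := by
  rw [pairZ, Finset.sum_filter]
  exact Finset.sum_congr rfl fun p hp => by simp [sv, hp]

theorem sum_sum_children {f : List ℕ → ℤ} (hf : ∀ c ∈ colS t, f c = 0) (r : List ℕ) :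
    ∑ p ∈ (uncS t).filter (fun p => r <+: p), ∑ s ∈ children t p, f s =
      ∑ p ∈ ((uncS t).filter (fun p => r <+: p)).erase r, f p := by
  set U := (uncS t).filter (fun p => r <+: p)
  set S := (vertS t).filter (fun s => s ≠ [] ∧ r <+: s.dropLast)
  have hchildren : ∀ p ∈ U, children t p = S.filter (fun s => s.dropLast = p) := by
    intro p hp
    rw [children, Finset.filter_filter]
    refine Finset.filter_congr fun s _ => ?_
    constructor
    · rintro ⟨hs, rfl⟩; exact ⟨⟨hs, (Finset.mem_filter.1 hp).2⟩, rfl⟩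
    · rintro ⟨⟨hs, -⟩, rfl⟩; exact ⟨hs, rfl⟩
  have hmaps : ∀ s ∈ S, s.dropLast ∈ U := fun s hs => by
    obtain ⟨hsv, hs, hrs⟩ := Finset.mem_filter.1 hs
    exact Finset.mem_filter.2 ⟨dropLast_mem_uncS hsv hs, hrs⟩
  have hSunc : S.filter (· ∈ uncS t) = U.erase r := by
    ext s
    simp only [S, U, Finset.mem_filter, Finset.mem_erase, List.ne_nil_and_prefix_dropLast_iff]
    constructor
    · rintro ⟨⟨-, hrs, hsr⟩, hs⟩; exact ⟨Ne.symm hsr, hs, hrs⟩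
    · rintro ⟨hsr, hs, hrs⟩; exact ⟨⟨uncS_subset_vertS hs, hrs, Ne.symm hsr⟩, hs⟩
  have hScol : ∑ s ∈ S.filter (· ∉ uncS t), f s = 0 := by
    refine Finset.sum_eq_zero fun s hs => ?_
    obtain ⟨hsS, hsu⟩ := Finset.mem_filter.1 hs
    exact hf s ((mem_uncS_or_mem_colS (Finset.mem_filter.1 hsS).1).resolve_left hsu)
  rw [Finset.sum_congr rfl fun p hp => by rw [hchildren p hp],
    Finset.sum_fiberwise_of_maps_to hmaps, ← Finset.sum_filter_add_sum_filter_not S (· ∈ uncS t),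
    hSunc, hScol, add_zero]

theorem pairZ_sv_vY {Y : Finset (List ℕ)} (hY : Y ∈ MCfin t) {r : List ℕ} (hr : r ∈ vertS t) :
    pairZ t (sv t r) (vY t Y) = uncut Y r := by
  rw [pairZ_sv]
  rcases mem_uncS_or_mem_colS hr with hru | hrc
  · calc ∑ p ∈ (uncS t).filter (fun p => r <+: p), vY t Y p
        = ∑ p ∈ (uncS t).filter (fun p => r <+: p),
            (uncut Y p - ∑ s ∈ children t p, uncut Y s) := by
          refine Finset.sum_congr rfl fun p hp => ?_
          obtain ⟨us, hus⟩ := mem_uncS.1 (Finset.mem_filter.1 hp).1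
          rw [vY_apply_of_sub_eq_node t Y hus, sum_range_append_singleton hus]
      _ = ∑ p ∈ (uncS t).filter (fun p => r <+: p), uncut Y p -
            ∑ p ∈ ((uncS t).filter (fun p => r <+: p)).erase r, uncut Y p := by
          rw [Finset.sum_sub_distrib, sum_sum_children (fun c => uncut_eq_zero_of_mem_colS hY)]
      _ = uncut Y r := by
          rw [← Finset.add_sum_erase _ _ (Finset.mem_filter.2 ⟨hru, List.prefix_refl r⟩),
            add_sub_cancel_right]
  · rw [uncut_eq_zero_of_mem_colS hY hrc]
    refine Finset.sum_eq_zero fun p hp => ?_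
    obtain ⟨hpu, hrp⟩ := Finset.mem_filter.1 hp
    exact absurd (eq_of_mem_colS_of_prefix hrc (uncS_subset_vertS hpu) hrp ▸ hrc)
      (notMem_colS_of_mem_uncS hpu)

theorem pairZ_wt_vY (hne : ∀ p, t.sub p ≠ some (node [])) {Y : Finset (List ℕ)}
    (hY : Y ∈ MCfin t) {d : List ℕ} (hd : d ∈ edgeS t) :
    pairZ t (wt t d) (vY t Y) = if d ∈ Y then 1 else 0 := by
  obtain ⟨hdnil, hdv⟩ := Finset.mem_erase.1 hd
  rw [wt_eq_sv_sub_sv, pairZ_sub_left, pairZ_sv_vY hY hdv,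
    pairZ_sv_vY hY (mem_vertS_of_prefix hdv (List.dropLast_prefix d)),
    uncut_dropLast_sub_uncut hne hY hd]

def cutBelow (t : CTree α) (p : List ℕ) : Finset (List ℕ) :=
  (edgeS t).filter (fun d => d.dropLast <+: p ∧ ¬ d <+: p)

theorem exists_mem_cutBelow_prefix {p r : List ℕ} (hr : r ∈ vertS t) (hrp : ¬ r <+: p) :
    ∃ d ∈ cutBelow t p, d <+: r := by
  induction r using List.reverseRecOn with
  | nil => exact absurd List.nil_prefix hrp
  | append_singleton r a ih =>
    by_cases h : r <+: p
    · refine ⟨r ++ [a], Finset.mem_filter.2 ⟨Finset.mem_erase.2 ⟨by simp, hr⟩, ?_, hrp⟩,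
        List.prefix_refl _⟩
      simpa using h
    · obtain ⟨d, hd, hdr⟩ := ih (mem_vertS_of_prefix hr (List.prefix_append r [a])) h
      exact ⟨d, hd, hdr.trans (List.prefix_append r [a])⟩

theorem cutBelow_mem_MCfin {p : List ℕ} (hp : p ∈ uncS t) : cutBelow t p ∈ MCfin t := by
  refine mem_MCfin.2 ⟨Finset.filter_subset _ _, fun c hc => ?_⟩
  have hcp : ¬ c <+: p := fun h => notMem_colS_of_mem_uncS hp
    (eq_of_mem_colS_of_prefix hc (uncS_subset_vertS hp) h ▸ hc)
  obtain ⟨d, hd, hdc⟩ := exists_mem_cutBelow_prefix (colS_subset_vertS hc) hcp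
  have hchain : ∀ a ∈ cutBelow t p, ∀ b ∈ cutBelow t p, a <+: b → a = b := by
    intro a ha b hb hab
    by_contra hba
    have := (List.ne_nil_and_prefix_dropLast_iff.2 ⟨hab, hba⟩).2
    exact (Finset.mem_filter.1 ha).2.2 (this.trans (Finset.mem_filter.1 hb).2.1)
  refine ⟨d, ⟨hd, hdc⟩, fun e ⟨he, hec⟩ => ?_⟩
  rcases List.prefix_or_prefix_of_prefix hec hdc with h | h
  · exact hchain e he d hd h
  · exact (hchain d hd e he h).symm

theorem uncut_cutBelow {p r : List ℕ} (hr : r ∈ vertS t) :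
    uncut (cutBelow t p) r = if r <+: p then 1 else 0 := by
  by_cases hrp : r <+: p
  · rw [if_pos hrp, uncut, if_neg]
    rintro ⟨e, he, -, her⟩
    exact (Finset.mem_filter.1 he).2.2 (her.trans hrp)
  · obtain ⟨d, hd, hdr⟩ := exists_mem_cutBelow_prefix hr hrp
    rw [if_neg hrp, uncut, if_pos ⟨d, hd, (Finset.mem_erase.1 (Finset.mem_filter.1 hd).1).1, hdr⟩]

theorem sum_range_ite_append_singleton_prefix {p q : List ℕ} {us : List (CTree α)}
    (hp : p ∈ vertS t) (hq : t.sub q = some (node us)) :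
    ∑ c ∈ Finset.range us.length, (if q ++ [c] <+: p then 1 else 0 : ℤ) =
      if q <+: p ∧ q ≠ p then 1 else 0 := by
  by_cases h : q <+: p ∧ q ≠ p
  · obtain ⟨⟨_ | ⟨c₀, s⟩, rfl⟩, hne⟩ := h
    · simp at hne
    have hc₀ : c₀ < us.length :=
      (append_singleton_mem_vertS_iff hq).1 (mem_vertS_of_prefix hp (by simp))
    rw [Finset.sum_eq_single c₀ (fun c _ hc => by simp [hc]) (by simp [hc₀])]
    simp
  · rw [if_neg h]
    refine Finset.sum_eq_zero fun c _ => if_neg fun hc => h ⟨(List.prefix_append _ _).trans hc, ?_⟩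
    rintro rfl
    simpa using hc.length_le

theorem vY_cutBelow {p q : List ℕ} (hp : p ∈ vertS t) (hq : q ∈ uncS t) :
    vY t (cutBelow t p) q = if q = p then 1 else 0 := by
  obtain ⟨us, hus⟩ := mem_uncS.1 hq
  rw [vY_apply_of_sub_eq_node t _ hus, uncut_cutBelow (uncS_subset_vertS hq),
    Finset.sum_congr rfl fun c hc => uncut_cutBelow
      ((append_singleton_mem_vertS_iff hus).2 (Finset.mem_range.1 hc)),
    sum_range_ite_append_singleton_prefix hp hus]
  by_cases hqp : q = p
  · simp [hqp]
  · by_cases h : q <+: p <;> simp [hqp, h]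

end CTree

/-- A function `n : MC(Γ) → ℤ` is of the form `n(Y) = ⟨u, v_Y⟩` for
some `u ∈ M` if and only if `∑_Y m(Y) n(Y) = 0` for every `m : MC(Γ) → ℤ` satisfying
`∑_{Y ∋ d} m(Y) = 0` for every edge `d ∈ E(Γ)`. -/
theorem form_pairing_vY_iff_orthogonal_relations {α : Type} (t : CTree α)
    (ht : t.IsColoredTree) (n : Finset (List ℕ) → ℤ) :
    (∃ u : List ℕ → ℤ, ∀ Y ∈ CTree.MCfin t, n Y = CTree.pairZ t u (CTree.vY t Y)) ↔
      ∀ m : Finset (List ℕ) → ℤ,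
        (∀ d ∈ CTree.edgeS t,
          ∑ Y ∈ (CTree.MCfin t).filter (fun Y => d ∈ Y), m Y = 0) →
        ∑ Y ∈ CTree.MCfin t, m Y * n Y = 0 := by
  exact exists_eq_sum_mul_iff_forall_relation
    (fun _ hm _ hq => CTree.sum_mul_vY_eq_zero ht.1 hm hq)
    (fun d hd => ⟨CTree.wt t d, fun _ hY => (CTree.pairZ_wt_vY ht.1 hY hd).symm⟩)
    (fun p hp => ⟨CTree.cutBelow t p, CTree.cutBelow_mem_MCfin hp,
      fun _ hq => CTree.vY_cutBelow (CTree.uncS_subset_vertS hp) hq⟩) n
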